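/- For λ ∈ ℝ, r a nonnegative integer, every nonnegative integer n, and every real x, the extended degenerate Bell polynomial satisfies Bel^{(r)}_{n,λ}(x) = Σ_{m=0}^{n} λ^{n−m} S_1(n,m) Σ_{k=0}^{n} (x^k/k!) Δ^k r^m, where Δ^k r^m = Σ_{l=0}^{k} C(k,l) (−1)^{k−l} (l+r)^m. -/

import Mathlib

open Finset

/-- The degenerate falling factorial `(x|λ)_n = x(x-λ)(x-2λ)⋯(x-(n-1)λ)`. -/
noncomputable def degFall (x lam : ℝ) (n : ℕ) : ℝ := ∏ i ∈ Finset.range n, (x - i * lam)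

/-- The formal power series `(1+λt)^{y/λ} = Σ_{m=0}^∞ (y|λ)_m t^m/m!`. -/
noncomputable def degExp (lam y : ℝ) : PowerSeries ℝ :=
  PowerSeries.mk fun m => degFall y lam m / m.factorial

/-- The degenerate Stirling numbers of the second kind `S_{2,λ}(n,k)`, defined by
`(1/k!)((1+λt)^{1/λ} - 1)^k = Σ_{n=k}^∞ S_{2,λ}(n,k) t^n/n!`. -/
noncomputable def degStirling2 (lam : ℝ) (n k : ℕ) : ℝ :=
  (n.factorial : ℝ) *
    PowerSeries.coeff n (((k.factorial : ℝ))⁻¹ • (degExp lam 1 - 1) ^ k)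

/-- The extended degenerate Stirling numbers of the second kind `S_{2,r}(n+r,k+r|λ)`,
defined by `(1/k!)(1+λt)^{r/λ}((1+λt)^{1/λ} - 1)^k = Σ_{n=k}^∞ S_{2,r}(n+r,k+r|λ) t^n/n!`. -/
noncomputable def extDegStirling2 (lam : ℝ) (r n k : ℕ) : ℝ :=
  (n.factorial : ℝ) *
    PowerSeries.coeff n
      (((k.factorial : ℝ))⁻¹ • (degExp lam r * (degExp lam 1 - 1) ^ k))

/-- The exponential `e^f = Σ_{k=0}^∞ f^k / k!` of a formal power series, computed
coefficientwise (the coefficientwise sums converge when `f` has zero constant term). -/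
noncomputable def expComp (f : PowerSeries ℝ) : PowerSeries ℝ :=
  PowerSeries.mk fun n => ∑' k : ℕ, PowerSeries.coeff n (f ^ k) / k.factorial

/-- The degenerate Bell polynomials, defined by
`e^{x((1+λt)^{1/λ} - 1)} = Σ_{n=0}^∞ Bel_{n,λ}(x) t^n/n!`. -/
noncomputable def degBell (lam x : ℝ) (n : ℕ) : ℝ :=
  (n.factorial : ℝ) * PowerSeries.coeff n (expComp (x • (degExp lam 1 - 1)))

/-- The extended degenerate Bell polynomials, defined by
`(1+λt)^{r/λ} e^{x((1+λt)^{1/λ} - 1)} = Σ_{n=0}^∞ Bel^{(r)}_{n,λ}(x) t^n/n!`. -/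
noncomputable def extDegBell (lam : ℝ) (r : ℕ) (x : ℝ) (n : ℕ) : ℝ :=
  (n.factorial : ℝ) *
    PowerSeries.coeff n (degExp lam r * expComp (x • (degExp lam 1 - 1)))

/-- The signed Stirling numbers of the first kind `S_1(n,k)`, defined by
`(x)_n = x(x-1)⋯(x-n+1) = Σ_{k=0}^n S_1(n,k) x^k`. -/
noncomputable def stirling1 (n k : ℕ) : ℝ :=
  (∏ i ∈ Finset.range n, (Polynomial.X - Polynomial.C (i : ℝ))).coeff k

/-- The Stirling numbers of the second kind, defined by
`(1/k!)(e^t - 1)^k = Σ_{n=k}^∞ S_2(n,k) t^n/n!`. -/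
noncomputable def stirling2 (n k : ℕ) : ℝ :=
  (n.factorial : ℝ) *
    PowerSeries.coeff n (((k.factorial : ℝ))⁻¹ • (PowerSeries.exp ℝ - 1) ^ k)

/-- The r-Stirling numbers of the second kind `S_{2,r}(n+r,k+r)`, defined by
`e^{rt}(1/k!)(e^t - 1)^k = Σ_{n=0}^∞ S_{2,r}(n+r,k+r) t^n/n!`. -/
noncomputable def rStirling2 (r n k : ℕ) : ℝ :=
  (n.factorial : ℝ) *
    PowerSeries.coeff n
      (PowerSeries.rescale (r : ℝ) (PowerSeries.exp ℝ) *
        ((k.factorial : ℝ))⁻¹ • (PowerSeries.exp ℝ - 1) ^ k)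

/-- The ordinary falling factorial `(x)_k = x(x-1)⋯(x-k+1)`. -/
noncomputable def fallFact (x : ℝ) (k : ℕ) : ℝ := ∏ i ∈ Finset.range k, (x - i)

/-! Coefficientwise, `(1+λt)^{a/λ} (1+λt)^{b/λ} = (1+λt)^{(a+b)/λ}` is the Vandermonde identity
for `(x|λ)_n`, so the binomial theorem gives
`(1+λt)^{r/λ} ((1+λt)^{1/λ} - 1)^k = Σ_l C(k,l) (-1)^{k-l} (1+λt)^{(l+r)/λ}`.
Only the terms `k ≤ n` of the exponential reach the coefficient of `t^n`, hence
`Bel^{(r)}_{n,λ}(x) = Σ_k x^k/k! Σ_l C(k,l) (-1)^{k-l} (l+r|λ)_n`. Finally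
`(y|λ)_n = Σ_m λ^{n-m} S_1(n,m) y^m`, since `(y|λ)_n` is the degree-`n` homogenization of the
falling factorial `(y)_n` evaluated at `(y, λ)`. -/

lemma PowerSeries.coeff_pow_eq_zero_of_lt {R : Type*} [CommSemiring R] {f : PowerSeries R}
    (hf : PowerSeries.constantCoeff f = 0) {n k : ℕ} (h : n < k) :
    PowerSeries.coeff n (f ^ k) = 0 := by
  obtain ⟨g, rfl⟩ := PowerSeries.X_dvd_iff.mpr hf
  rw [mul_pow, PowerSeries.coeff_X_pow_mul', if_neg (by omega)]

lemma Finset.sum_mul_sum_mul_comm {ι κ R : Type*} [CommSemiring R] (s : Finset ι) (t : Finset κ)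
    (f : ι → R) (g : κ → R) (h : ι → κ → R) :
    ∑ i ∈ s, f i * ∑ j ∈ t, g j * h i j = ∑ j ∈ t, g j * ∑ i ∈ s, f i * h i j := by
  simp only [mul_sum]
  rw [sum_comm]
  simp only [mul_left_comm]

section Polynomial

open Polynomial

lemma Polynomial.eval_homogenize_eq_sum {R : Type*} [CommSemiring R] (p : R[X]) (n : ℕ)
    (x : Fin 2 → R) :
    MvPolynomial.eval x (p.homogenize n) =
      ∑ m ∈ range (n + 1), p.coeff m * x 0 ^ m * x 1 ^ (n - m) := by
  simp only [homogenize, Finset.Nat.sum_antidiagonal_eq_sum_range_succ_mk, MvPolynomial.eval_sum]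
  refine sum_congr rfl fun m _ => ?_
  simp [MvPolynomial.eval_monomial, Finsupp.prod_fintype, Fin.prod_univ_two, mul_assoc]

lemma Polynomial.homogenize_X_sub_C {R : Type*} [CommRing R] (a : R) :
    (X - C a).homogenize 1 = MvPolynomial.X 0 - MvPolynomial.C a * MvPolynomial.X 1 := by
  simp

lemma degFall_eq_eval_homogenize (y lam : ℝ) (n : ℕ) :
    degFall y lam n =
      MvPolynomial.eval ![y, lam] ((∏ i ∈ range n, (X - C (i : ℝ))).homogenize n) := by
  have h := homogenize_finsetProd (s := range n) (n := fun _ => 1)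
    (fun i _ => natDegree_X_sub_C_le (i : ℝ))
  rw [sum_const, card_range, smul_eq_mul, mul_one] at h
  rw [degFall, h, map_prod]
  refine prod_congr rfl fun i _ => ?_
  rw [homogenize_X_sub_C]
  simp [mul_comm]

lemma degFall_eq_sum_stirling1 (y lam : ℝ) (n : ℕ) :
    degFall y lam n = ∑ m ∈ range (n + 1), lam ^ (n - m) * stirling1 n m * y ^ m := by
  rw [degFall_eq_eval_homogenize, eval_homogenize_eq_sum]
  refine sum_congr rfl fun m _ => ?_
  simp only [stirling1, Matrix.cons_val_zero, Matrix.cons_val_one]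
  ring

end Polynomial

lemma degFall_succ (y lam : ℝ) (n : ℕ) :
    degFall y lam (n + 1) = degFall y lam n * (y - n * lam) :=
  prod_range_succ _ _

lemma degFall_add (lam a b : ℝ) (n : ℕ) :
    degFall (a + b) lam n =
      ∑ ij ∈ antidiagonal n, (n.choose ij.1 : ℝ) * (degFall a lam ij.1 * degFall b lam ij.2) := by
  induction n with
  | zero => simp [degFall]
  | succ n ih =>
    rw [degFall_succ, ih, sum_mul,
      sum_antidiagonal_choose_succ_mul (fun i j => degFall a lam i * degFall b lam j),
      ← sum_add_distrib]
    refine sum_congr rfl fun ij hij => ?_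
    rw [HasAntidiagonal.mem_antidiagonal] at hij
    rw [← Nat.choose_symm_of_eq_add hij.symm, degFall_succ, degFall_succ, ← hij]
    push_cast
    ring

lemma degExp_mul_degExp (lam a b : ℝ) : degExp lam a * degExp lam b = degExp lam (a + b) := by
  ext n
  simp only [PowerSeries.coeff_mul, degExp, PowerSeries.coeff_mk, degFall_add, sum_div]
  refine sum_congr rfl fun ij hij => ?_
  obtain ⟨i, j⟩ := ij
  rw [HasAntidiagonal.mem_antidiagonal] at hij
  subst hij
  rw [Nat.cast_add_choose]
  field_simp

lemma degExp_zero (lam : ℝ) : degExp lam 0 = 1 := by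
  ext (_ | n)
  · simp [degExp, degFall]
  · simp [degExp, degFall, prod_range_succ']

lemma degExp_one_pow (lam : ℝ) (l : ℕ) : degExp lam 1 ^ l = degExp lam l := by
  induction l with
  | zero => simp [degExp_zero]
  | succ l ih => rw [pow_succ, ih, degExp_mul_degExp, Nat.cast_succ]

lemma degExp_mul_degExp_one_sub_one_pow (lam r : ℝ) (k : ℕ) :
    degExp lam r * (degExp lam 1 - 1) ^ k =
      ∑ l ∈ range (k + 1), ((k.choose l : ℝ) * (-1) ^ (k - l)) • degExp lam (l + r) := by
  rw [sub_eq_add_neg, add_pow, mul_sum]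
  refine sum_congr rfl fun l _ => ?_
  rw [degExp_one_pow, ← degExp_mul_degExp, Algebra.smul_def]
  simp only [map_mul, map_pow, map_neg, map_one, map_natCast, PowerSeries.algebraMap_eq]
  ring

lemma coeff_expComp_eq_sum {f : PowerSeries ℝ} (hf : PowerSeries.constantCoeff f = 0)
    {j n : ℕ} (hj : j ≤ n) :
    PowerSeries.coeff j (expComp f) =
      ∑ k ∈ range (n + 1), PowerSeries.coeff j (f ^ k) / k.factorial := by
  rw [expComp, PowerSeries.coeff_mk]
  refine tsum_eq_sum fun k hk => ?_
  rw [mem_range, not_lt] at hk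
  rw [PowerSeries.coeff_pow_eq_zero_of_lt hf (by omega), zero_div]

lemma coeff_mul_expComp (p : PowerSeries ℝ) {f : PowerSeries ℝ}
    (hf : PowerSeries.constantCoeff f = 0) (n : ℕ) :
    PowerSeries.coeff n (p * expComp f) =
      ∑ k ∈ range (n + 1), PowerSeries.coeff n (p * f ^ k) / k.factorial := by
  simp only [PowerSeries.coeff_mul, sum_div]
  rw [sum_comm]
  refine sum_congr rfl fun ij hij => ?_
  rw [HasAntidiagonal.mem_antidiagonal] at hij
  rw [coeff_expComp_eq_sum hf (n := n) (by omega), mul_sum]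
  simp only [mul_div_assoc]

lemma extDegBell_eq_sum_degFall (lam : ℝ) (r : ℕ) (x : ℝ) (n : ℕ) :
    extDegBell lam r x n =
      ∑ k ∈ range (n + 1), x ^ k / k.factorial *
        ∑ l ∈ range (k + 1), (k.choose l : ℝ) * (-1) ^ (k - l) * degFall ((l : ℝ) + r) lam n := by
  have hf : PowerSeries.constantCoeff (x • (degExp lam 1 - 1)) = 0 := by
    rw [← PowerSeries.coeff_zero_eq_constantCoeff_apply]
    simp [degExp, degFall]
  rw [extDegBell, coeff_mul_expComp _ hf, mul_sum]
  refine sum_congr rfl fun k _ => ?_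
  rw [smul_pow, mul_smul_comm, map_smul, degExp_mul_degExp_one_sub_one_pow]
  simp only [map_sum, map_smul, smul_eq_mul, degExp, PowerSeries.coeff_mk, mul_sum, sum_div]
  refine sum_congr rfl fun l _ => ?_
  field_simp

theorem extDegBell_eq_sum_fwdDiff (lam : ℝ) (r : ℕ) (n : ℕ) (x : ℝ) :
    extDegBell lam r x n =
      ∑ m ∈ Finset.range (n + 1), lam ^ (n - m) * stirling1 n m *
        ∑ k ∈ Finset.range (n + 1), x ^ k / (k.factorial : ℝ) *
          (∑ l ∈ Finset.range (k + 1),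
            (k.choose l : ℝ) * (-1 : ℝ) ^ (k - l) * ((l : ℝ) + r) ^ m) := by
  rw [extDegBell_eq_sum_degFall, ← sum_mul_sum_mul_comm]
  refine sum_congr rfl fun k _ => congrArg _ ?_
  simp only [degFall_eq_sum_stirling1]
  exact sum_mul_sum_mul_comm _ _ _ _ _
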